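/- arXiv:1510.05826 — 4 statements merged into one kernel-verified Lean document; each statement's English description precedes it below -/
import Mathlib

section
/- For centered normal distributions P₁ = N(0, σ₁²) and P₂ = N(0, σ₂²) with σ₂ ≤ σ₁, the Wasserstein distance satisfies d_W(P₁, P₂) ≤ √(2/π) · (σ₁² − σ₂²)/σ₂. -/
/-!
Scaling a standard Gaussian `X` couples `N(0,σ₂²)` and `N(0,σ₁²)` as `σ₂ X` and `σ₁ X`. For
1-Lipschitz `h`, `|E h(σ₂ X) - E h(σ₁ X)| ≤ (σ₁ - σ₂) E|X| = (σ₁ - σ₂) √(2/π)`, and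
`σ₁ - σ₂ ≤ (σ₁² - σ₂²)/σ₂` because `σ₂ ≤ σ₁ + σ₂`.
-/

open MeasureTheory ProbabilityTheory Real Set
open scoped NNReal

theorem integral_Ioi_mul_exp_neg_mul_sq {b : ℝ} (hb : 0 < b) :
    ∫ x in Ioi (0 : ℝ), x * rexp (-b * x ^ 2) = (2 * b)⁻¹ := by
  have h := integral_mul_cexp_neg_mul_sq (b := (b : ℂ)) (by simpa using hb)
  rw [← Complex.ofReal_inj, ← integral_complex_ofReal]
  push_cast
  exact h

theorem integral_abs_mul_exp_neg_mul_sq {b : ℝ} (hb : 0 < b) :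
    ∫ x, |x| * rexp (-b * x ^ 2) = b⁻¹ := by
  calc ∫ x, |x| * rexp (-b * x ^ 2) = ∫ x, |x| * rexp (-b * |x| ^ 2) := by simp_rw [sq_abs]
    _ = 2 * ∫ x in Ioi (0 : ℝ), x * rexp (-b * x ^ 2) :=
        integral_comp_abs (f := fun x => x * rexp (-b * x ^ 2))
    _ = b⁻¹ := by rw [integral_Ioi_mul_exp_neg_mul_sq hb]; field_simp

theorem integral_abs_gaussianReal_zero (v : ℝ≥0) :
    ∫ x, |x| ∂gaussianReal 0 v = √(2 * v / π) := by
  rcases eq_or_ne v 0 with rfl | hv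
  · simp [gaussianReal_zero_var]
  have hv' : (0 : ℝ) < v := by positivity
  have hdensity (x : ℝ) : gaussianPDFReal 0 v x • |x|
      = (√(2 * π * v))⁻¹ * (|x| * rexp (-(2 * v : ℝ)⁻¹ * x ^ 2)) := by
    rw [gaussianPDFReal, smul_eq_mul, sub_zero]; ring_nf
  simp_rw [integral_gaussianReal_eq_integral_smul hv, hdensity]
  rw [integral_const_mul, integral_abs_mul_exp_neg_mul_sq (by positivity), inv_inv,
    show 2 * π * v = π * (2 * v) by ring, sqrt_mul pi_pos.le, sqrt_div' _ pi_pos.le]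
  have hsq : √(2 * v) ^ 2 = 2 * v := sq_sqrt (by positivity)
  have hπ : 0 < √π := sqrt_pos.2 pi_pos
  have h2v : 0 < √(2 * v) := sqrt_pos.2 (by positivity)
  field_simp
  linarith

theorem LipschitzWith.integrable_comp {α E F : Type*} [MeasurableSpace α] {μ : Measure α}
    [IsFiniteMeasure μ] [NormedAddCommGroup E] [NormedAddCommGroup F] {K : ℝ≥0} {h : E → F}
    (hh : LipschitzWith K h) {f : α → E} (hf : Integrable f μ) :
    Integrable (fun x => h (f x)) μ := by
  have : Integrable (fun x => h (f x) - h 0) μ := by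
    rw [← memLp_one_iff_integrable] at hf ⊢
    exact (hh.sub (LipschitzWith.const (h 0))).comp_memLp (by simp) hf
  exact (this.add (integrable_const (h 0))).congr (.of_forall fun x => sub_add_cancel _ _)

theorem LipschitzWith.norm_integral_comp_sub_le {α E F : Type*} [MeasurableSpace α]
    {μ : Measure α} [IsFiniteMeasure μ] [NormedAddCommGroup E] [NormedAddCommGroup F]
    [NormedSpace ℝ F] {K : ℝ≥0} {h : E → F} (hh : LipschitzWith K h) {f g : α → E}
    (hf : Integrable f μ) (hg : Integrable g μ) :
    ‖∫ x, h (f x) ∂μ - ∫ x, h (g x) ∂μ‖ ≤ K * ∫ x, ‖f x - g x‖ ∂μ := by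
  rw [← integral_sub (hh.integrable_comp hf) (hh.integrable_comp hg), ← integral_const_mul]
  exact (norm_integral_le_integral_norm _).trans <| integral_mono
    ((hh.integrable_comp hf).sub (hh.integrable_comp hg)).norm
    (((hf.sub hg).norm).const_mul _) fun x => hh.norm_sub_le _ _

theorem gaussianReal_zero_one_map_const_mul (c : ℝ) :
    (gaussianReal 0 1).map (c * ·) = gaussianReal 0 (c ^ 2).toNNReal := by
  rw [gaussianReal_map_const_mul, mul_zero, mul_one, Real.toNNReal_of_nonneg (sq_nonneg c)]

/-- For centered normals `N(0,σ₁²)` and `N(0,σ₂²)` with `σ₂ ≤ σ₁`,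
`d_W(P₁,P₂) ≤ √(2/π) (σ₁² − σ₂²)/σ₂`. -/
theorem wasserstein_centered_gaussians_le
    (σ₁ σ₂ : ℝ) (hσ₂ : 0 < σ₂) (hle : σ₂ ≤ σ₁)
    (W : ℝ)
    (hW : IsLUB {d : ℝ | ∃ h : ℝ → ℝ, LipschitzWith 1 h ∧
        d = |(∫ x, h x ∂(gaussianReal 0 (σ₂ ^ 2).toNNReal))
             - ∫ x, h x ∂(gaussianReal 0 (σ₁ ^ 2).toNNReal)|} W) :
    W ≤ Real.sqrt (2 / Real.pi) * (σ₁ ^ 2 - σ₂ ^ 2) / σ₂ := by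
  refine hW.2 ?_
  rintro _ ⟨h, hh, rfl⟩
  have hX : Integrable id (gaussianReal 0 1) :=
    memLp_one_iff_integrable.1 (memLp_id_gaussianReal 1)
  simp_rw [← gaussianReal_zero_one_map_const_mul,
    integral_map (measurable_const_mul _).aemeasurable hh.continuous.aestronglyMeasurable]
  calc |∫ x, h (σ₂ * x) ∂gaussianReal 0 1 - ∫ x, h (σ₁ * x) ∂gaussianReal 0 1|
      ≤ (1 : ℝ≥0) * ∫ x, ‖σ₂ * x - σ₁ * x‖ ∂gaussianReal 0 1 :=
        hh.norm_integral_comp_sub_le (hX.const_mul σ₂) (hX.const_mul σ₁)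
    _ = (σ₁ - σ₂) * √(2 / π) := by
        simp_rw [NNReal.coe_one, one_mul, ← sub_mul, norm_mul, Real.norm_eq_abs,
          abs_sub_comm σ₂, abs_of_nonneg (sub_nonneg.2 hle)]
        rw [integral_const_mul, integral_abs_gaussianReal_zero, NNReal.coe_one, mul_one]
    _ ≤ √(2 / π) * (σ₁ ^ 2 - σ₂ ^ 2) / σ₂ := by
        rw [le_div_iff₀ hσ₂]
        have hσ₁ : 0 ≤ σ₁ := hσ₂.le.trans hle
        nlinarith [mul_nonneg (sqrt_nonneg (2 / π)) (mul_nonneg (sub_nonneg.2 hle) hσ₁)]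
end

section
/- Let P₁ = Beta(y+1, n−y+1) and P₂ = Beta(α+y, β+n−y) with α, β > 0 and 0 ≤ y ≤ n. Then d_W(P₁,P₂) ≥ |((y+1)/(n+2)) · ((α+β−2)/(n+α+β)) − (α−1)/(n+α+β)|. -/
open MeasureTheory Set

/-! Testing the definition of `W` against the `1`-Lipschitz function `id` bounds it below by the
difference of the means of the two posteriors, and the mean of `Beta(a, b)` is `a / (a + b)`
because `B(a + 1, b) = a / (a + b) · B(a, b)`. -/

namespace ProbabilityTheory

lemma beta_add_one_left {a b : ℝ} (ha : 0 < a) (hb : 0 < b) :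
    beta (a + 1) b = a / (a + b) * beta a b := by
  have hab : a + b ≠ 0 := by positivity
  have hΓ := (Real.Gamma_pos_of_pos (add_pos ha hb)).ne'
  rw [beta, beta, Real.Gamma_add_one ha.ne', add_right_comm, Real.Gamma_add_one hab]
  field_simp

lemma setIntegral_Ioo_rpow_mul_one_sub_rpow {a b : ℝ} (ha : 0 < a) (hb : 0 < b) :
    ∫ t in Ioo (0 : ℝ) 1, t ^ (a - 1) * (1 - t) ^ (b - 1) = beta a b := by
  have hcomplex : Complex.betaIntegral a b
      = ((∫ t in Ioo (0 : ℝ) 1, t ^ (a - 1) * (1 - t) ^ (b - 1) : ℝ) : ℂ) := by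
    rw [Complex.betaIntegral, intervalIntegral.integral_of_le zero_le_one,
      integral_Ioc_eq_integral_Ioo, ← integral_complex_ofReal]
    refine setIntegral_congr_fun measurableSet_Ioo fun t ht => ?_
    rw [Complex.ofReal_mul, Complex.ofReal_cpow ht.1.le,
      Complex.ofReal_cpow (sub_nonneg.2 ht.2.le)]
    push_cast
    ring
  rw [beta_eq_betaIntegralReal a b ha hb, hcomplex, Complex.ofReal_re]

lemma withDensity_ofReal_normalized_eq_betaMeasure {a b : ℝ} (ha : 0 < a) (hb : 0 < b) :
    volume.withDensity (fun x => ENNReal.ofReal (if x ∈ Ioo (0 : ℝ) 1 then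
        (∫ t in Ioo (0 : ℝ) 1, t ^ (a - 1) * (1 - t) ^ (b - 1))⁻¹
          * x ^ (a - 1) * (1 - x) ^ (b - 1) else 0))
      = betaMeasure a b := by
  rw [setIntegral_Ioo_rpow_mul_one_sub_rpow ha hb, ← one_div]
  rfl

lemma integral_id_betaMeasure {a b : ℝ} (ha : 0 < a) (hb : 0 < b) :
    ∫ x, x ∂betaMeasure a b = a / (a + b) := by
  have hdensity : ∀ x, (betaPDF a b x).toReal • x = (Ioo (0 : ℝ) 1).indicator
      (fun x => 1 / beta a b * (x ^ (a + 1 - 1) * (1 - x) ^ (b - 1))) x := by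
    intro x
    by_cases hx : x ∈ Ioo (0 : ℝ) 1
    · have hbeta_pos := beta_pos ha hb
      have h_one_sub_pos := sub_pos.2 hx.2
      rw [indicator_of_mem hx, betaPDF_of_pos_lt_one hx.1 hx.2,
        ENNReal.toReal_ofReal (by have := hx.1; positivity),
        show a + 1 - 1 = (a - 1) + 1 by ring, Real.rpow_add hx.1, Real.rpow_one, smul_eq_mul]
      ring
    · have hx' : ¬(0 < x ∧ x < 1) := hx
      rw [indicator_of_notMem hx, betaPDF_eq, if_neg hx', ENNReal.ofReal_zero, ENNReal.toReal_zero,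
        zero_smul]
  rw [betaMeasure, integral_withDensity_eq_integral_toReal_smul (f := betaPDF a b)
    (measurable_betaPDFReal a b).ennreal_ofReal (ae_of_all _ fun _ => ENNReal.ofReal_lt_top)]
  simp_rw [hdensity]
  rw [integral_indicator measurableSet_Ioo, integral_const_mul,
    setIntegral_Ioo_rpow_mul_one_sub_rpow (by positivity) hb, beta_add_one_left ha hb]
  field_simp [(beta_pos ha hb).ne']

end ProbabilityTheory

open ProbabilityTheory in
theorem wasserstein_beta_posteriors_lower_bound_general
    (α β : ℝ) (hα : 0 < α) (hβ : 0 < β)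
    (n y : ℕ) (hy : y ≤ n)
    (betaPdf : ℝ → ℝ → ℝ → ℝ)
    (hbeta : betaPdf = fun a b x => if x ∈ Ioo (0:ℝ) 1 then
        (∫ t in Ioo (0:ℝ) 1, t ^ (a - 1) * (1 - t) ^ (b - 1))⁻¹
          * x ^ (a - 1) * (1 - x) ^ (b - 1) else 0)
    (P₁ P₂ : Measure ℝ)
    (hP₁ : P₁ = volume.withDensity
        (fun x => ENNReal.ofReal (betaPdf ((y : ℝ) + 1) ((n : ℝ) - y + 1) x)))
    (hP₂ : P₂ = volume.withDensity
        (fun x => ENNReal.ofReal (betaPdf (α + y) (β + n - y) x)))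
    (W : ℝ)
    (hW : IsLUB {d : ℝ | ∃ h : ℝ → ℝ, LipschitzWith 1 h ∧
        d = |(∫ x, h x ∂P₂) - ∫ x, h x ∂P₁|} W) :
    |((y : ℝ) + 1) / (n + 2) * ((α + β - 2) / (n + α + β))
        - (α - 1) / (n + α + β)| ≤ W := by
  have hyn : (y : ℝ) ≤ n := by exact_mod_cast hy
  have hmean₁ : ∫ x, x ∂P₁ = (y + 1) / (n + 2) := by
    rw [hP₁, hbeta, withDensity_ofReal_normalized_eq_betaMeasure (by positivity) (by linarith),
      integral_id_betaMeasure (by positivity) (by linarith)]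
    ring_nf
  have hmean₂ : ∫ x, x ∂P₂ = (α + y) / (n + α + β) := by
    rw [hP₂, hbeta, withDensity_ofReal_normalized_eq_betaMeasure (by positivity) (by linarith),
      integral_id_betaMeasure (by positivity) (by linarith)]
    ring_nf
  calc |((y : ℝ) + 1) / (n + 2) * ((α + β - 2) / (n + α + β)) - (α - 1) / (n + α + β)|
      = |(∫ x, x ∂P₂) - ∫ x, x ∂P₁| := by
        rw [hmean₁, hmean₂, abs_sub_comm]
        have : (n : ℝ) + α + β ≠ 0 := by positivity
        congr 1
        field_simp
        ring
    _ ≤ W := hW.1 ⟨id, LipschitzWith.id, rfl⟩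

/-- Lower bound on the Wasserstein distance between the binomial posteriors
`Beta(y+1, n−y+1)` (uniform prior) and `Beta(α+y, β+n−y)` (Beta prior). -/
theorem wasserstein_beta_posteriors_lower_bound
    (α β : ℝ) (hα : 0 < α) (hβ : 0 < β)
    (n y : ℕ) (hn : 1 ≤ n) (hy : y ≤ n)
    (betaPdf : ℝ → ℝ → ℝ → ℝ)
    (hbeta : betaPdf = fun a b x => if x ∈ Ioo (0:ℝ) 1 then
        (∫ t in Ioo (0:ℝ) 1, t ^ (a - 1) * (1 - t) ^ (b - 1))⁻¹
          * x ^ (a - 1) * (1 - x) ^ (b - 1) else 0)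
    (P₁ P₂ : Measure ℝ)
    (hP₁ : P₁ = volume.withDensity
        (fun x => ENNReal.ofReal (betaPdf ((y : ℝ) + 1) ((n : ℝ) - y + 1) x)))
    (hP₂ : P₂ = volume.withDensity
        (fun x => ENNReal.ofReal (betaPdf (α + y) (β + n - y) x)))
    (W : ℝ)
    (hW : IsLUB {d : ℝ | ∃ h : ℝ → ℝ, LipschitzWith 1 h ∧
        d = |(∫ x, h x ∂P₂) - ∫ x, h x ∂P₁|} W) :
    |((y : ℝ) + 1) / (n + 2) * ((α + β - 2) / (n + α + β))
        - (α - 1) / (n + α + β)| ≤ W :=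
  wasserstein_beta_posteriors_lower_bound_general α β hα hβ n y hy betaPdf hbeta P₁ P₂ hP₁ hP₂ W hW
end

section
/- Let P have continuous density p on interval support with closure [a,b], finite mean μ, cdf F. For every Lipschitz-almost-everywhere-differentiable h with the Fubini condition satisfied, and every x ∈ [a,b]: |∫_a^x (h(y) − E[h(X)]) p(y) dy| ≤ ‖h'‖_∞ ∫_a^x (μ − y) p(y) dy, where X ∼ P. -/
open MeasureTheory Set

/-- For a monotone function `φ`, the partial integral of the centered
function against the density is nonpositive. -/
lemma mono_key (p : ℝ → ℝ) (hpos : ∀ x, 0 ≤ p x) (hint : Integrable p)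
    (htot : ∫ x, p x = 1) (φ : ℝ → ℝ) (hmono : Monotone φ)
    (hφ : Integrable (fun y => φ y * p y)) (x : ℝ) :
    ∫ y in Iio x, (φ y - ∫ z, φ z * p z) * p y ≤ 0 := by
  set A := ∫ y in Iio x, p y with hAdef
  set B := ∫ y in Ici x, p y with hBdef
  set I := ∫ y in Iio x, φ y * p y with hIdef
  set J := ∫ y in Ici x, φ y * p y with hJdef
  have hcompl : (Iio x)ᶜ = Ici x := compl_Iio
  have hAB : A + B = 1 := by
    rw [hAdef, hBdef, ← hcompl, integral_add_compl measurableSet_Iio hint, htot]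
  have hIJ : I + J = ∫ z, φ z * p z := by
    rw [hIdef, hJdef, ← hcompl, integral_add_compl measurableSet_Iio hφ]
  have hA0 : 0 ≤ A := setIntegral_nonneg measurableSet_Iio (fun y _ => hpos y)
  have hB0 : 0 ≤ B := setIntegral_nonneg measurableSet_Ici (fun y _ => hpos y)
  have hI : I ≤ φ x * A := by
    rw [hIdef, hAdef, ← integral_const_mul]
    exact setIntegral_mono_on hφ.integrableOn ((hint.const_mul (φ x)).integrableOn)
      measurableSet_Iio
      (fun y hy => mul_le_mul_of_nonneg_right (hmono (le_of_lt hy)) (hpos y))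
  have hJ : φ x * B ≤ J := by
    rw [hJdef, hBdef, ← integral_const_mul]
    exact setIntegral_mono_on ((hint.const_mul (φ x)).integrableOn) hφ.integrableOn
      measurableSet_Ici
      (fun y hy => mul_le_mul_of_nonneg_right (hmono hy) (hpos y))
  have hsplit : ∫ y in Iio x, (φ y - ∫ z, φ z * p z) * p y
      = I - (I + J) * A := by
    rw [hIJ]
    have : ∀ y, (φ y - ∫ z, φ z * p z) * p y
        = φ y * p y - (∫ z, φ z * p z) * p y := fun y => by ring
    simp_rw [this]
    rw [integral_sub hφ.integrableOn ((hint.const_mul _).integrableOn),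
      integral_const_mul]
  rw [hsplit]
  have key : I * B ≤ J * A := by
    calc I * B ≤ (φ x * A) * B := mul_le_mul_of_nonneg_right hI hB0
    _ = (φ x * B) * A := by ring
    _ ≤ J * A := mul_le_mul_of_nonneg_right hJ hA0
  have hBeq : B = 1 - A := by linarith
  have heq : I - (I + J) * A = I * B - J * A := by rw [hBeq]; ring
  linarith [key]

/-- Technical bound (Lemma 5.1, item 1): for `h` almost everywhere differentiable
with bounded derivative `h'` (in the sense of the fundamental theorem of calculus)
and `X ∼ P` with density `p`, for all `x`,
`|∫_a^x (h(y) − E[h(X)]) p(y) dy| ≤ ‖h'‖ ∫_a^x (μ − y) p(y) dy`. -/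
theorem stein_technical_bound
    (p : ℝ → ℝ) (hp : Continuous p) (hpos : ∀ x, 0 ≤ p x)
    (hint : Integrable p) (htot : ∫ x, p x = 1)
    (hmom : Integrable (fun x => x * p x))
    (hsupp : Set.OrdConnected {x | 0 < p x})
    (μ : ℝ) (hμ : μ = ∫ x, x * p x)
    (h h' : ℝ → ℝ) (C : ℝ) (hC : ∀ v, |h' v| ≤ C)
    (hmeas : Measurable h')
    (hftc : ∀ u v : ℝ, h v - h u = ∫ t in u..v, h' t)
    (hhint : Integrable (fun y => h y * p y))
    (x : ℝ) :
    |∫ y in Iio x, (h y - ∫ z, h z * p z) * p y|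
      ≤ C * ∫ y in Iio x, (μ - y) * p y := by
  have hC0 : 0 ≤ C := le_trans (abs_nonneg _) (hC 0)
  -- Lipschitz bound: |h v - h u| ≤ C * (v - u) for u ≤ v
  have hlip : ∀ u v : ℝ, u ≤ v → |h v - h u| ≤ C * (v - u) := by
    intro u v huv
    rw [hftc u v]
    have := intervalIntegral.norm_integral_le_of_norm_le_const
      (C := C) (f := h') (a := u) (b := v)
      (fun t _ => by simpa using hC t)
    simpa [abs_of_nonneg (sub_nonneg.mpr huv)] using this
  -- the two monotone auxiliary functions
  have hmono₁ : Monotone (fun y => C * y + h y) := by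
    intro u v huv
    have := hlip u v huv
    have h1 := abs_le.mp this
    simp only
    nlinarith [h1.1]
  have hmono₂ : Monotone (fun y => C * y - h y) := by
    intro u v huv
    have := hlip u v huv
    have h1 := abs_le.mp this
    simp only
    nlinarith [h1.2]
  have hφ₁ : Integrable (fun y => (C * y + h y) * p y) := by
    have := (hmom.const_mul C).add hhint
    refine this.congr (Filter.Eventually.of_forall fun y => by simp; ring)
  have hφ₂ : Integrable (fun y => (C * y - h y) * p y) := by
    have := (hmom.const_mul C).sub hhint
    refine this.congr (Filter.Eventually.of_forall fun y => by simp; ring)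
  -- means of the auxiliary functions
  have hmean₁ : ∫ z, (C * z + h z) * p z = C * μ + ∫ z, h z * p z := by
    have : ∀ z, (C * z + h z) * p z = C * (z * p z) + h z * p z := fun z => by ring
    simp_rw [this]
    rw [integral_add (hmom.const_mul C) hhint, integral_const_mul, hμ]
  have hmean₂ : ∫ z, (C * z - h z) * p z = C * μ - ∫ z, h z * p z := by
    have : ∀ z, (C * z - h z) * p z = C * (z * p z) - h z * p z := fun z => by ring
    simp_rw [this]
    rw [integral_sub (hmom.const_mul C) hhint, integral_const_mul, hμ]
  have key₁ := mono_key p hpos hint htot _ hmono₁ hφ₁ x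
  have key₂ := mono_key p hpos hint htot _ hmono₂ hφ₂ x
  rw [hmean₁] at key₁
  rw [hmean₂] at key₂
  -- decompose partial integrals
  set E := ∫ z, h z * p z with hEdef
  have hRint : IntegrableOn (fun y => (μ - y) * p y) (Iio x) := by
    have : Integrable (fun y => μ * p y - y * p y) := (hint.const_mul μ).sub hmom
    exact (this.congr (Filter.Eventually.of_forall fun y => by ring)).integrableOn
  have hGint : IntegrableOn (fun y => (h y - E) * p y) (Iio x) := by
    have : Integrable (fun y => h y * p y - E * p y) := hhint.sub (hint.const_mul E)
    exact (this.congr (Filter.Eventually.of_forall fun y => by ring)).integrableOn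
  have hdec₁ : ∫ y in Iio x, ((C * y + h y) - (C * μ + E)) * p y
      = (∫ y in Iio x, (h y - E) * p y) - C * ∫ y in Iio x, (μ - y) * p y := by
    have e : ∀ y, ((C * y + h y) - (C * μ + E)) * p y
        = (h y - E) * p y - C * ((μ - y) * p y) := fun y => by ring
    simp_rw [e]
    rw [integral_sub hGint (hRint.const_mul C), integral_const_mul]
  have hdec₂ : ∫ y in Iio x, ((C * y - h y) - (C * μ - E)) * p y
      = -((∫ y in Iio x, (h y - E) * p y) + C * ∫ y in Iio x, (μ - y) * p y) := by
    have e : ∀ y, ((C * y - h y) - (C * μ - E)) * p y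
        = -((h y - E) * p y + C * ((μ - y) * p y)) := fun y => by ring
    simp_rw [e]
    rw [integral_neg, integral_add hGint (hRint.const_mul C), integral_const_mul]
  rw [hdec₁] at key₁
  rw [hdec₂] at key₂
  rw [abs_le]
  constructor <;> linarith
end

section
/- Let P have continuous density p on interval support [a,b] with mean μ and Stein kernel τ_P, and let h be 1-Lipschitz with E|h(X)| < ∞. Define g_h(x) = (τ_P(x) p(x))^{-1} ∫_a^x (h(y) − E[h(X)]) p(y) dy. Then ‖g_h‖_∞ ≤ 1. -/
open MeasureTheory Set

/-- Stein factor bound: for `h` 1-Lipschitz, the function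
`g_h(x) = (τ_P(x) p(x))⁻¹ ∫_a^x (h(y) − E[h(X)]) p(y) dy` satisfies `‖g_h‖ ≤ 1`
(at every point where `τ_P p > 0`). -/
theorem stein_factor_bound
    (p : ℝ → ℝ) (hp : Continuous p) (hpos : ∀ x, 0 ≤ p x)
    (hint : Integrable p) (htot : ∫ x, p x = 1)
    (hmom : Integrable (fun x => x * p x))
    (hsupp : Set.OrdConnected {x | 0 < p x})
    (μ : ℝ) (hμ : μ = ∫ x, x * p x)
    (h : ℝ → ℝ) (hlip : LipschitzWith 1 h)
    (hhint : Integrable (fun y => h y * p y))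
    (x : ℝ) (hτ : 0 < ∫ y in Iio x, (μ - y) * p y) :
    |(∫ y in Iio x, (μ - y) * p y)⁻¹
        * ∫ y in Iio x, (h y - ∫ z, h z * p z) * p y| ≤ 1 := by
  set S : Set ℝ := Iio x with hS
  set T : Set ℝ := Ici x with hT
  set cS : ℝ := ∫ y in S, p y with hcS
  set cT : ℝ := ∫ y in T, p y with hcT
  set dS : ℝ := ∫ y in S, h y * p y with hdS
  set dT : ℝ := ∫ y in T, h y * p y with hdT
  set mS : ℝ := ∫ y in S, y * p y with hmS
  set mT : ℝ := ∫ y in T, y * p y with hmT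
  have hc : cS + cT = 1 := by
    rw [hcS, hcT, intervalIntegral.integral_Iio_add_Ici hint.integrableOn hint.integrableOn, htot]
  have hd : dS + dT = ∫ z, h z * p z := by
    rw [hdS, hdT, intervalIntegral.integral_Iio_add_Ici hhint.integrableOn hhint.integrableOn]
  have hm : mS + mT = μ := by
    rw [hmS, hmT, intervalIntegral.integral_Iio_add_Ici hmom.integrableOn hmom.integrableOn, hμ]
  -- the numerator in closed form
  have hF : (∫ y in S, (h y - ∫ z, h z * p z) * p y) = ∫ y in S, (h y * cT - dT) * p y := by
    rw [← hd]
    have e1 : (fun y => (h y - (dS + dT)) * p y)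
        = fun y => h y * p y - (dS + dT) * p y := by funext y; ring
    have e2 : (fun y => (h y * cT - dT) * p y)
        = fun y => cT * (h y * p y) - dT * p y := by funext y; ring
    rw [e1, e2, integral_sub hhint.integrableOn ((hint.integrableOn).const_mul _),
      integral_sub (hhint.integrableOn.const_mul _) ((hint.integrableOn).const_mul _),
      integral_const_mul _ _, integral_const_mul _ _, integral_const_mul _ _]
    rw [← hdS, ← hcS]
    linear_combination (-dS) * hc
  -- τ in closed form
  have hτ' : (∫ y in S, (μ - y) * p y) = ∫ y in S, (mT - y * cT) * p y := by
    rw [← hm]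
    have e1 : (fun y => (mS + mT - y) * p y)
        = fun y => (mS + mT) * p y - y * p y := by funext y; ring
    have e2 : (fun y => (mT - y * cT) * p y)
        = fun y => mT * p y - cT * (y * p y) := by funext y; ring
    rw [e1, e2, integral_sub ((hint.integrableOn).const_mul _) hmom.integrableOn,
      integral_sub ((hint.integrableOn).const_mul _) (hmom.integrableOn.const_mul _),
      integral_const_mul _ _, integral_const_mul _ _, integral_const_mul _ _]
    rw [← hmS, ← hcS]
    linear_combination mS * hc
  -- pointwise bound on S
  have habs : ∀ y ∈ S, |h y * cT - dT| ≤ mT - y * cT := by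
    intro y hy
    have hy' : y < x := hy
    have hI1 : (∫ z in T, (h y - h z) * p z) = h y * cT - dT := by
      have e : (fun z => (h y - h z) * p z)
          = fun z => (h y) * p z - h z * p z := by funext z; ring
      rw [e, integral_sub ((hint.integrableOn).const_mul _) hhint.integrableOn,
        integral_const_mul _ _]
    have hI2 : (∫ z in T, (z - y) * p z) = mT - y * cT := by
      have e : (fun z => (z - y) * p z)
          = fun z => z * p z - y * p z := by funext z; ring
      rw [e, integral_sub hmom.integrableOn ((hint.integrableOn).const_mul _),
        integral_const_mul _ _]
    rw [← hI1, ← hI2]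
    have hint1 : IntegrableOn (fun z => (h y - h z) * p z) T := by
      have e : (fun z => (h y - h z) * p z)
          = fun z => (h y) * p z - h z * p z := by funext z; ring
      rw [e]; exact ((hint.integrableOn).const_mul _).sub hhint.integrableOn
    have hint2 : IntegrableOn (fun z => (z - y) * p z) T := by
      have e : (fun z => (z - y) * p z)
          = fun z => z * p z - y * p z := by funext z; ring
      rw [e]; exact hmom.integrableOn.sub ((hint.integrableOn).const_mul _)
    calc |∫ z in T, (h y - h z) * p z| ≤ ∫ z in T, |(h y - h z) * p z| := by
          simpa only [Real.norm_eq_abs] using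
            norm_integral_le_integral_norm (μ := volume.restrict T)
              (f := fun z => (h y - h z) * p z)
      _ ≤ ∫ z in T, (z - y) * p z := by
          apply setIntegral_mono_on hint1.abs hint2 measurableSet_Ici
          intro z hz
          have hz' : x ≤ z := hz
          have hyz : |h y - h z| ≤ z - y := by
            have h1 := hlip.dist_le_mul y z
            rw [NNReal.coe_one, one_mul, Real.dist_eq, Real.dist_eq] at h1
            calc |h y - h z| ≤ |y - z| := h1
              _ = z - y := by rw [abs_sub_comm]; exact abs_of_nonneg (by linarith)
          rw [abs_mul, abs_of_nonneg (hpos z)]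
          exact mul_le_mul_of_nonneg_right hyz (hpos z)
  -- |numerator| ≤ τ
  have hmain : |∫ y in S, (h y - ∫ z, h z * p z) * p y| ≤ ∫ y in S, (μ - y) * p y := by
    rw [hF, hτ']
    have hintR : IntegrableOn (fun y => (mT - y * cT) * p y) S := by
      have e : (fun y => (mT - y * cT) * p y)
          = fun y => mT * p y - cT * (y * p y) := by funext y; ring
      rw [e]; exact ((hint.integrableOn).const_mul _).sub (hmom.integrableOn.const_mul _)
    have hintL : IntegrableOn (fun y => (h y * cT - dT) * p y) S := by
      have e : (fun y => (h y * cT - dT) * p y)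
          = fun y => cT * (h y * p y) - dT * p y := by funext y; ring
      rw [e]; exact (hhint.integrableOn.const_mul _).sub ((hint.integrableOn).const_mul _)
    calc |∫ y in S, (h y * cT - dT) * p y| ≤ ∫ y in S, |(h y * cT - dT) * p y| := by
          simpa only [Real.norm_eq_abs] using
            norm_integral_le_integral_norm (μ := volume.restrict S)
              (f := fun y => (h y * cT - dT) * p y)
      _ ≤ ∫ y in S, (mT - y * cT) * p y := by
          apply setIntegral_mono_on hintL.abs hintR measurableSet_Iio
          intro y hy
          rw [abs_mul, abs_of_nonneg (hpos y)]
          exact mul_le_mul_of_nonneg_right (habs y hy) (hpos y)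
  -- conclude
  rw [abs_mul, abs_of_pos (inv_pos.mpr hτ)]
  calc (∫ y in S, (μ - y) * p y)⁻¹ * |∫ y in S, (h y - ∫ z, h z * p z) * p y|
      ≤ (∫ y in S, (μ - y) * p y)⁻¹ * (∫ y in S, (μ - y) * p y) :=
        mul_le_mul_of_nonneg_left hmain (le_of_lt (inv_pos.mpr hτ))
    _ = 1 := inv_mul_cancel₀ (ne_of_gt hτ)
end
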